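/- Let u, v ∈ ℝ⁴ be linearly independent unit spacelike vectors. A real number λ makes (λ−1)u − λv lightlike if and only if (2 − 2⟨u,v⟩)λ² + (2⟨u,v⟩ − 2)λ + 1 = 0. Consequently: if ⟨u,v⟩² < 1 there is no such λ; if ⟨u,v⟩ = −1 there is exactly one such λ, namely λ = 1/2; if ⟨u,v⟩ < −1 there are exactly two such λ; and in both of the latter cases every such λ lies in the open interval (0,1). -/

import Mathlib

/-- The Lorentz (Minkowski) inner product on ℝ⁴. -/
def lor (u v : Fin 4 → ℝ) : ℝ :=
  u 0 * v 0 + u 1 * v 1 + u 2 * v 2 - u 3 * v 3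

/-- A vector is lightlike if it is nonzero and Lorentz-null. -/
def IsLightlike (u : Fin 4 → ℝ) : Prop := u ≠ 0 ∧ lor u u = 0

/-!
By bilinearity the Lorentz norm of `(λ - 1) u - λ v` is `2 (1 - k) (λ - 1/2)² + (1 + k) / 2` with
`k = ⟨u, v⟩`, and linear independence keeps the vector nonzero, so lightlike pencil members are
exactly the roots of this quadratic. For `k < 1` the roots satisfy
`(λ - 1/2)² = -(1 + k) / (4 (1 - k))`; this is negative when `k² < 1`, zero when `k = -1`,
positive when `k < -1`, and always below `1/4`, which puts every root in `(0, 1)`.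
-/

theorem sub_one_smul_sub_smul_ne_zero {R M : Type*} [CommRing R] [Nontrivial R] [AddCommGroup M]
    [Module R M] {u v : M} (h : LinearIndependent R ![u, v]) (l : R) :
    (l - 1) • u - l • v ≠ 0 := by
  intro h0
  obtain ⟨h1, h2⟩ := LinearIndependent.pair_iff.mp h (l - 1) (-l) (by rw [← h0]; module)
  rw [neg_eq_zero] at h2
  simp [h2] at h1

theorem lor_smul_sub_smul_self (u v : Fin 4 → ℝ) (a b : ℝ) :
    lor (a • u - b • v) (a • u - b • v) =
      a ^ 2 * lor u u - 2 * a * b * lor u v + b ^ 2 * lor v v := by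
  simp only [lor, Pi.sub_apply, Pi.smul_apply, smul_eq_mul]
  ring

/-- The Lorentz norm of `(l - 1) • u - l • v` for unit spacelike `u`, `v` with `⟨u, v⟩ = k`. -/
def pencilQuadratic (k l : ℝ) : ℝ := (2 - 2 * k) * l ^ 2 + (2 * k - 2) * l + 1

theorem pencilQuadratic_eq_vertex (k l : ℝ) :
    pencilQuadratic k l = 2 * (1 - k) * (l - 1 / 2) ^ 2 + (1 + k) / 2 := by
  unfold pencilQuadratic
  ring

theorem pencilQuadratic_eq_zero_iff {k l : ℝ} (hk : k < 1) :
    pencilQuadratic k l = 0 ↔ (l - 1 / 2) ^ 2 = -(1 + k) / (4 * (1 - k)) := by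
  rw [pencilQuadratic_eq_vertex, eq_div_iff (by linarith)]
  constructor <;> intro h <;> linarith

theorem isLightlike_pencil_iff {u v : Fin 4 → ℝ} (hu : lor u u = 1) (hv : lor v v = 1)
    (hLI : LinearIndependent ℝ ![u, v]) (l : ℝ) :
    IsLightlike ((l - 1) • u - l • v) ↔ pencilQuadratic (lor u v) l = 0 := by
  have hnorm : lor ((l - 1) • u - l • v) ((l - 1) • u - l • v) = pencilQuadratic (lor u v) l := by
    rw [lor_smul_sub_smul_self, hu, hv, pencilQuadratic]
    ring
  rw [IsLightlike, hnorm, and_iff_right (sub_one_smul_sub_smul_ne_zero hLI l)]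

theorem pencilQuadratic_ne_zero {k : ℝ} (hk : k ^ 2 < 1) (l : ℝ) : pencilQuadratic k l ≠ 0 := by
  have hsq : 0 ≤ 2 * (1 - k) * (l - 1 / 2) ^ 2 :=
    mul_nonneg (by nlinarith) (sq_nonneg _)
  rw [pencilQuadratic_eq_vertex]
  nlinarith

theorem pencilQuadratic_neg_one_eq_zero_iff {l : ℝ} : pencilQuadratic (-1) l = 0 ↔ l = 1 / 2 := by
  rw [pencilQuadratic_eq_zero_iff (by norm_num)]
  norm_num [sub_eq_zero]

theorem exists_pencilQuadratic_roots {k : ℝ} (hk : k < -1) :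
    ∃ l₁ l₂ : ℝ, l₁ ≠ l₂ ∧ ∀ l, pencilQuadratic k l = 0 ↔ l = l₁ ∨ l = l₂ := by
  have hc : 0 < -(1 + k) / (4 * (1 - k)) := div_pos (by linarith) (by linarith)
  set s := √(-(1 + k) / (4 * (1 - k)))
  have hs : 0 < s := Real.sqrt_pos.mpr hc
  refine ⟨1 / 2 + s, 1 / 2 - s, by linarith, fun l => ?_⟩
  rw [pencilQuadratic_eq_zero_iff (by linarith), ← Real.sq_sqrt hc.le,
    sq_eq_sq_iff_eq_or_eq_neg, sub_eq_iff_eq_add', sub_eq_iff_eq_add', ← sub_eq_add_neg]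

theorem mem_Ioo_of_pencilQuadratic_eq_zero {k l : ℝ} (hk : k ≤ -1) (hl : pencilQuadratic k l = 0) :
    l ∈ Set.Ioo 0 1 := by
  rw [pencilQuadratic_eq_zero_iff (by linarith)] at hl
  have hlt : (l - 1 / 2) ^ 2 < (1 / 2) ^ 2 := by
    rw [hl, div_lt_iff₀ (by linarith)]
    linarith
  obtain ⟨h0, h1⟩ := abs_lt_of_sq_lt_sq' hlt (by norm_num)
  constructor <;> linarith

theorem stmt_4 (u v : Fin 4 → ℝ)
    (hu : lor u u = 1) (hv : lor v v = 1)
    (hLI : LinearIndependent ℝ ![u, v]) :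
    (∀ l : ℝ, IsLightlike ((l - 1) • u - l • v) ↔
      (2 - 2 * lor u v) * l ^ 2 + (2 * lor u v - 2) * l + 1 = 0) ∧
    ((lor u v) ^ 2 < 1 → ∀ l : ℝ, ¬ IsLightlike ((l - 1) • u - l • v)) ∧
    (lor u v = -1 → ∀ l : ℝ, (IsLightlike ((l - 1) • u - l • v) ↔ l = 1 / 2)) ∧
    (lor u v < -1 → ∃ l₁ l₂ : ℝ, l₁ ≠ l₂ ∧
      ∀ l : ℝ, (IsLightlike ((l - 1) • u - l • v) ↔ (l = l₁ ∨ l = l₂))) ∧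
    (lor u v ≤ -1 → ∀ l : ℝ, IsLightlike ((l - 1) • u - l • v) →
      l ∈ Set.Ioo (0 : ℝ) 1) := by
  have key := isLightlike_pencil_iff hu hv hLI
  refine ⟨key, fun hk l => ?_, fun hk l => ?_, fun hk => ?_, fun hk l hl => ?_⟩
  · rw [key]
    exact pencilQuadratic_ne_zero hk l
  · rw [key, hk]
    exact pencilQuadratic_neg_one_eq_zero_iff
  · simpa only [key] using exists_pencilQuadratic_roots hk
  · exact mem_Ioo_of_pencilQuadratic_eq_zero hk ((key l).mp hl)
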